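/- Let r_1, ..., r_n be n distinct real numbers and let T > 1 be a real number. Then for every M > 0 there exists a real number R with M ≤ R ≤ M·T^n such that |e^{i r_j R} - 1| < 4π/T for all j = 1, ..., n. -/

import Mathlib

/-!
Put `α j = r j * M / (2π)`, `Q = ⌊T⌋₊` and cut the cube `[0, 1)ⁿ` into `Qⁿ` boxes of side `1 / Q`.
Two of the `Qⁿ + 1` points `(fract (k * α j))_j`, `k = 0, …, Qⁿ`, say for `k = a < b`, lie in the
same box, so `q = b - a ≤ Qⁿ` brings every `q * α j` within `1 / Q` of an integer `m_j`. For `R = q * M` the angle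
`r j * R` is then within `2π / Q < 4π / T` of `2π m_j`, and `|e^{iθ} - 1| ≤ |θ|`.
-/

open Real Complex

theorem abs_sub_lt_one_div_of_natFloor_mul_eq {x y : ℝ} {Q : ℕ} (hQ : 0 < Q) (hx : 0 ≤ x)
    (hy : 0 ≤ y) (h : ⌊Q * x⌋₊ = ⌊Q * y⌋₊) : |x - y| < 1 / Q := by
  have hQ' : (0 : ℝ) < Q := by exact_mod_cast hQ
  have hfloor : ⌊Q * x⌋ = ⌊Q * y⌋ := by
    rw [← Int.natCast_floor_eq_floor (by positivity), ← Int.natCast_floor_eq_floor (by positivity), h]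
  have := Int.abs_sub_lt_one_of_floor_eq_floor hfloor
  rw [← mul_sub, abs_mul, abs_of_pos hQ'] at this
  rwa [lt_div_iff₀ hQ', mul_comm]

theorem exists_nat_abs_mul_sub_int_lt {ι : Type*} [Fintype ι] (α : ι → ℝ) {Q : ℕ} (hQ : 0 < Q) :
    ∃ q : ℕ, 0 < q ∧ q ≤ Q ^ Fintype.card ι ∧ ∀ i, ∃ m : ℤ, |q * α i - m| < 1 / Q := by
  classical
  have hQ' : (0 : ℝ) < Q := by exact_mod_cast hQ
  let box : Fin (Q ^ Fintype.card ι + 1) → ι → Fin Q := fun k i =>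
    ⟨⌊Q * Int.fract (k * α i)⌋₊, (Nat.floor_lt (by positivity)).mpr
      (mul_lt_of_lt_one_right hQ' (Int.fract_lt_one _))⟩
  obtain ⟨a, b, hne, hab⟩ := Fintype.exists_ne_map_eq_of_card_lt box (by simp)
  wlog hlt : a < b generalizing a b
  · exact this b a hne.symm hab.symm (hne.symm.lt_of_le (not_lt.mp hlt))
  refine ⟨b - a, by omega, by omega, fun i => ⟨⌊b * α i⌋ - ⌊a * α i⌋, ?_⟩⟩
  have hbox := abs_sub_lt_one_div_of_natFloor_mul_eq hQ (Int.fract_nonneg _) (Int.fract_nonneg _)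
    (congrArg Fin.val (congrFun hab i)).symm
  convert hbox using 2
  rw [Nat.cast_sub hlt.le, Int.fract, Int.fract]
  push_cast
  ring

theorem norm_exp_I_mul_sub_one_le_abs_sub_int_mul_two_pi (x : ℝ) (m : ℤ) :
    ‖exp (I * x) - 1‖ ≤ |x - m * (2 * π)| := by
  have hperiod : exp (I * x) = exp (I * ↑(x - m * (2 * π))) := by
    push_cast
    rw [mul_sub, Complex.exp_sub, show I * (m * (2 * π)) = m * (2 * π * I) by ring,
      exp_int_mul_two_pi_mul_I, div_one]
  rw [hperiod, ← Real.norm_eq_abs]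
  exact norm_exp_I_mul_ofReal_sub_one_le

theorem simultaneous_dirichlet_approx_general (n : ℕ) (r : Fin n → ℝ)
    (T : ℝ) (hT : 1 < T) :
    ∀ M : ℝ, 0 < M → ∃ R : ℝ, M ≤ R ∧ R ≤ M * T ^ n ∧
      ∀ j : Fin n, ‖Complex.exp (Complex.I * r j * R) - 1‖ < 4 * π / T := by
  intro M hM
  have hQ : 0 < ⌊T⌋₊ := Nat.floor_pos.mpr hT.le
  have hQ' : (0 : ℝ) < ⌊T⌋₊ := by exact_mod_cast hQ
  have hTQ : T < 2 * ⌊T⌋₊ := by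
    linarith [Nat.lt_floor_add_one T, (Nat.one_le_cast (α := ℝ)).mpr hQ]
  obtain ⟨q, hq, hqQ, happrox⟩ := exists_nat_abs_mul_sub_int_lt (fun j => r j * M / (2 * π)) hQ
  refine ⟨q * M, le_mul_of_one_le_left hM.le (by exact_mod_cast hq), ?_, fun j => ?_⟩
  · calc (q : ℝ) * M ≤ (⌊T⌋₊ : ℝ) ^ n * M := by gcongr; exact_mod_cast (Fintype.card_fin n ▸ hqQ)
      _ ≤ M * T ^ n := by rw [mul_comm]; gcongr; exact Nat.floor_le (by linarith)
  obtain ⟨m, hm⟩ := happrox j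
  rw [mul_assoc, ← ofReal_mul]
  calc ‖exp (I * ↑(r j * (q * M))) - 1‖ ≤ |r j * (q * M) - m * (2 * π)| :=
        norm_exp_I_mul_sub_one_le_abs_sub_int_mul_two_pi _ m
    _ = 2 * π * |q * (r j * M / (2 * π)) - m| := by
        rw [← abs_of_pos two_pi_pos, ← abs_mul, abs_of_pos two_pi_pos]
        congr 1
        field_simp
    _ < 2 * π * (1 / ⌊T⌋₊) := by gcongr
    _ < 4 * π / T := by
        rw [mul_one_div, div_lt_div_iff₀ hQ' (by linarith)]
        nlinarith [pi_pos]

theorem simultaneous_dirichlet_approx (n : ℕ) (r : Fin n → ℝ)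
    (hr : Function.Injective r) (T : ℝ) (hT : 1 < T) :
    ∀ M : ℝ, 0 < M → ∃ R : ℝ, M ≤ R ∧ R ≤ M * T ^ n ∧
      ∀ j : Fin n, ‖Complex.exp (Complex.I * r j * R) - 1‖ < 4 * π / T :=
  simultaneous_dirichlet_approx_general n r T hT
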